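/- For n ≥ 3 and p,q,p′,q′ ≥ 1 with p+q = p′+q′ = n−1, the identity x^p h k x^q t ≈ h x^{p′} k t x^{q′} is equationally equivalent to the three identities x^p h x^q ≈ h x^{n−1}, x^p k x^q ≈ x^{p′} k x^{q′}, and x^{n−1} t ≈ x^{p′} t x^{q′}. -/

import Mathlib

abbrev Word := List ℕ

def subst (φ : ℕ → Word) (w : Word) : Word := w.flatMap φ

inductive Deduce (S : Set (Word × Word)) : Word → Word → Prop
  | refl (w : Word) : Deduce S w w
  | symm {u v : Word} : Deduce S u v → Deduce S v u
  | trans {u v w : Word} : Deduce S u v → Deduce S v w → Deduce S u w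
  | step (a b : Word) (φ : ℕ → Word) {s t : Word} (h : (s, t) ∈ S) :
      Deduce S (a ++ subst φ s ++ b) (a ++ subst φ t ++ b)

def FM (w : Word) : Type := Option {u : Word // u <:+: w}

def fmul {w : Word} : FM w → FM w → FM w
  | some u, some v =>
      if h : (u.1 ++ v.1) <:+: w then some ⟨u.1 ++ v.1, h⟩ else none
  | _, _ => none

def fone (w : Word) : FM w := some ⟨[], List.nil_infix⟩

theorem fmul_none_left {w : Word} (a : FM w) : fmul none a = none := rfl

theorem fmul_none_right {w : Word} (a : FM w) : fmul a none = none := by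
  rcases a with _ | u <;> rfl

theorem fmul_some {w : Word} (u v : {u : Word // u <:+: w}) :
    fmul (some u) (some v) =
      if h : (u.1 ++ v.1) <:+: w then some ⟨u.1 ++ v.1, h⟩ else none := rfl

theorem fmul_assoc {w : Word} (a b c : FM w) : fmul (fmul a b) c = fmul a (fmul b c) := by
  rcases a with _ | u
  · rfl
  rcases b with _ | v
  · rfl
  rcases c with _ | t
  · repeat erw [fmul_none_right]
  rw [fmul_some, fmul_some]
  by_cases h : (u.1 ++ v.1 ++ t.1) <:+: w
  · have h1 : (u.1 ++ v.1) <:+: w := List.IsInfix.trans ⟨[], t.1, by simp⟩ h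
    have h2 : (v.1 ++ t.1) <:+: w := List.IsInfix.trans ⟨u.1, [], by simp⟩ h
    rw [dif_pos h1, fmul_some, dif_pos h2, fmul_some, dif_pos h,
      dif_pos (show (u.1 ++ (v.1 ++ t.1)) <:+: w by simpa [List.append_assoc] using h)]
    simp [List.append_assoc]
    all_goals rfl
  · by_cases h1 : (u.1 ++ v.1) <:+: w
    · rw [dif_pos h1, fmul_some, dif_neg h]
      by_cases h2 : (v.1 ++ t.1) <:+: w
      · rw [dif_pos h2, fmul_some,
          dif_neg (fun hh => h (by simpa [List.append_assoc] using hh))]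
      · erw [dif_neg h2, fmul_none_right]
    · erw [dif_neg h1, fmul_none_left]
      by_cases h2 : (v.1 ++ t.1) <:+: w
      · rw [dif_pos h2, fmul_some,
          dif_neg (fun hh => h1 (List.IsInfix.trans ⟨[], t.1, by simp⟩ hh))]
      · erw [dif_neg h2, fmul_none_right]

instance (w : Word) : Monoid (FM w) where
  mul := fmul
  one := fone w
  mul_assoc := fmul_assoc
  one_mul := by
    rintro (_ | u)
    · rfl
    · show fmul (fone w) (some u) = some u
      rw [fone, fmul_some, dif_pos (by simpa using u.2)]
      simp
      all_goals rfl
  mul_one := by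
    rintro (_ | u)
    · rfl
    · show fmul (some u) (fone w) = some u
      rw [fone, fmul_some, dif_pos (by simpa using u.2)]
      simp
      all_goals rfl

def SatId (M : Type) [Monoid M] (p : Word × Word) : Prop :=
  ∀ φ : ℕ → M, (p.1.map φ).prod = (p.2.map φ).prod

def VSat (E : Set (Word × Word)) (p : Word × Word) : Prop :=
  ∀ (M : Type) [Monoid M], (∀ q ∈ E, SatId M q) → SatId M p

def ids0 : Set (Word × Word) :=
  {([0,1,2,0,3,1],[1,0,2,0,3,1]), ([0,2,0,1,3,1],[0,2,1,0,3,1]), ([0,2,1,3,0,1],[0,2,1,3,1,0])}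

def idA (n : ℕ) : Word × Word :=
  (List.replicate n 0 ++ (List.range n).map (· + 1),
   ((List.range n).map (fun i => [i + 1, 0])).flatten)

def rigid (e₀ : ℕ) (es : List ℕ) : Word :=
  List.replicate e₀ 0 ++ (((List.range es.length).zip es).map (fun p => (p.1 + 1) :: List.replicate p.2 0)).flatten

def Bword (n i : ℕ) : Word := List.replicate i 0 ++ 1 :: List.replicate (n - 1 - i) 0

def wmr (m r : ℕ) : Word := rigid (m - 1) (List.replicate r (m - 1))

def X (p : ℕ) : Word := List.replicate p 0

/-! Variables are encoded as `x = 0`, `h = 1`, `k = 2`, `t = 3`.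

Both sides of `x^p hk x^q t ≈ h x^{p'} kt x^{q'}` reduce to `hkt x^{n-1}` through instances of
the three identities that fix `x` and replace their other letter by `hk`, `t` or `kt`.
Conversely, erasing two of the letters `h`, `k`, `t` from the single identity yields each of
the three. -/

instance (S : Set (Word × Word)) : Trans (Deduce S) (Deduce S) (Deduce S) := ⟨Deduce.trans⟩

theorem Deduce.subst_of_mem {S : Set (Word × Word)} {s t : Word} (h : (s, t) ∈ S)
    (φ : ℕ → Word) : Deduce S (subst φ s) (subst φ t) := by
  simpa using Deduce.step [] [] φ h

@[simp]
theorem subst_append (φ : ℕ → Word) (u v : Word) :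
    subst φ (u ++ v) = subst φ u ++ subst φ v :=
  List.flatMap_append

@[simp]
theorem subst_cons (φ : ℕ → Word) (i : ℕ) (w : Word) :
    subst φ (i :: w) = φ i ++ subst φ w :=
  List.flatMap_cons

@[simp]
theorem subst_nil (φ : ℕ → Word) : subst φ [] = [] := rfl

theorem subst_X {φ : ℕ → Word} (h : φ 0 = [0]) (m : ℕ) : subst φ (X m) = X m := by
  induction m with
  | zero => rfl
  | succ m ih => simpa [X, List.replicate_succ, h] using ih

theorem X_add (a b : ℕ) : X (a + b) = X a ++ X b :=
  List.replicate_add a b 0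

def fixingX (u : Word) (i : ℕ) : Word := if i = 0 then [0] else u

@[simp]
theorem fixingX_of_ne_zero (u : Word) {i : ℕ} (hi : i ≠ 0) : fixingX u i = u :=
  if_neg hi

@[simp]
theorem subst_fixingX_X (u : Word) (m : ℕ) : subst (fixingX u) (X m) = X m :=
  subst_X rfl m

def erasingAllBut (c i : ℕ) : Word := if i = 0 ∨ i = c then [i] else []

@[simp]
theorem erasingAllBut_self (c : ℕ) : erasingAllBut c c = [c] := if_pos (Or.inr rfl)

@[simp]
theorem erasingAllBut_of_ne {c i : ℕ} (h0 : i ≠ 0) (hc : i ≠ c) : erasingAllBut c i = [] :=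
  if_neg (by tauto)

@[simp]
theorem subst_erasingAllBut_X (c m : ℕ) : subst (erasingAllBut c) (X m) = X m :=
  subst_X rfl m

theorem deduce_hkt_of_h_k_t {S : Set (Word × Word)} {p q p' q' m : ℕ}
    (idH : (X p ++ [1] ++ X q, [1] ++ X m) ∈ S)
    (idK : (X p ++ [2] ++ X q, X p' ++ [2] ++ X q') ∈ S)
    (idT : (X m ++ [3], X p' ++ [3] ++ X q') ∈ S) :
    Deduce S (X p ++ [1, 2] ++ X q ++ [3]) ([1] ++ X p' ++ [2, 3] ++ X q') :=
  calc Deduce S (X p ++ [1, 2] ++ X q ++ [3]) ([1, 2] ++ X m ++ [3]) := by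
        simpa using Deduce.step [] [3] (fixingX [1, 2]) idH
    Deduce S _ ([1, 2] ++ X p' ++ [3] ++ X q') := by
        simpa using Deduce.step [1, 2] [] (fixingX [3]) idT
    Deduce S _ ([1, 2] ++ X p ++ [3] ++ X q) := by
        simpa using (Deduce.step [1, 2] [] (fixingX [3]) idK).symm
    Deduce S _ ([1, 2, 3] ++ X m) := by
        simpa using Deduce.step [1, 2] [] (fixingX [3]) idH
    Deduce S _ ([1] ++ X p ++ [2, 3] ++ X q) := by
        simpa using (Deduce.step [1] [] (fixingX [2, 3]) idH).symm
    Deduce S _ ([1] ++ X p' ++ [2, 3] ++ X q') := by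
        simpa using Deduce.step [1] [] (fixingX [2, 3]) idK

section ErasingLetters

variable {S : Set (Word × Word)} {p q p' q' : ℕ}
  (idHKT : (X p ++ [1, 2] ++ X q ++ [3], [1] ++ X p' ++ [2, 3] ++ X q') ∈ S)
include idHKT

theorem deduce_h_of_hkt {m : ℕ} (hpq' : p' + q' = m) :
    Deduce S (X p ++ [1] ++ X q) ([1] ++ X m) := by
  simpa [← hpq', X_add] using Deduce.subst_of_mem idHKT (erasingAllBut 1)

theorem deduce_k_of_hkt : Deduce S (X p ++ [2] ++ X q) (X p' ++ [2] ++ X q') := by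
  simpa using Deduce.subst_of_mem idHKT (erasingAllBut 2)

theorem deduce_t_of_hkt {m : ℕ} (hpq : p + q = m) :
    Deduce S (X m ++ [3]) (X p' ++ [3] ++ X q') := by
  simpa [← hpq, X_add] using Deduce.subst_of_mem idHKT (erasingAllBut 3)

end ErasingLetters

theorem stmt8_general (n p q p' q' : ℕ)
    (hpq : p + q = n - 1) (hpq' : p' + q' = n - 1) :
    Deduce {(X p ++ [1] ++ X q, [1] ++ X (n-1)),
            (X p ++ [2] ++ X q, X p' ++ [2] ++ X q'),
            (X (n-1) ++ [3], X p' ++ [3] ++ X q')}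
      (X p ++ [1, 2] ++ X q ++ [3]) ([1] ++ X p' ++ [2, 3] ++ X q') ∧
    Deduce {(X p ++ [1, 2] ++ X q ++ [3], [1] ++ X p' ++ [2, 3] ++ X q')}
      (X p ++ [1] ++ X q) ([1] ++ X (n-1)) ∧
    Deduce {(X p ++ [1, 2] ++ X q ++ [3], [1] ++ X p' ++ [2, 3] ++ X q')}
      (X p ++ [2] ++ X q) (X p' ++ [2] ++ X q') ∧
    Deduce {(X p ++ [1, 2] ++ X q ++ [3], [1] ++ X p' ++ [2, 3] ++ X q')}
      (X (n-1) ++ [3]) (X p' ++ [3] ++ X q') :=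
  ⟨deduce_hkt_of_h_k_t (Set.mem_insert _ _) (Set.mem_insert_of_mem _ (Set.mem_insert _ _))
      (Set.mem_insert_of_mem _ (Set.mem_insert_of_mem _ rfl)),
    deduce_h_of_hkt (Set.mem_singleton _) hpq', deduce_k_of_hkt (Set.mem_singleton _),
    deduce_t_of_hkt (Set.mem_singleton _) hpq⟩

/-- For `n ≥ 3` and `p,q,p',q' ≥ 1` with `p+q = p'+q' = n-1`, the identity
`x^p h k x^q t ≈ h x^{p'} k t x^{q'}` is equationally equivalent to the identities
`x^p h x^q ≈ h x^{n-1}`, `x^p k x^q ≈ x^{p'} k x^{q'}`, and `x^{n-1} t ≈ x^{p'} t x^{q'}`.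
(Variables: `x = 0`, `h = 1`, `k = 2`, `t = 3`.) -/
theorem stmt8 (n p q p' q' : ℕ) (hn : 3 ≤ n)
    (hp : 1 ≤ p) (hq : 1 ≤ q) (hp' : 1 ≤ p') (hq' : 1 ≤ q')
    (hpq : p + q = n - 1) (hpq' : p' + q' = n - 1) :
    Deduce {(X p ++ [1] ++ X q, [1] ++ X (n-1)),
            (X p ++ [2] ++ X q, X p' ++ [2] ++ X q'),
            (X (n-1) ++ [3], X p' ++ [3] ++ X q')}
      (X p ++ [1, 2] ++ X q ++ [3]) ([1] ++ X p' ++ [2, 3] ++ X q') ∧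
    Deduce {(X p ++ [1, 2] ++ X q ++ [3], [1] ++ X p' ++ [2, 3] ++ X q')}
      (X p ++ [1] ++ X q) ([1] ++ X (n-1)) ∧
    Deduce {(X p ++ [1, 2] ++ X q ++ [3], [1] ++ X p' ++ [2, 3] ++ X q')}
      (X p ++ [2] ++ X q) (X p' ++ [2] ++ X q') ∧
    Deduce {(X p ++ [1, 2] ++ X q ++ [3], [1] ++ X p' ++ [2, 3] ++ X q')}
      (X (n-1) ++ [3]) (X p' ++ [3] ++ X q') :=
  stmt8_general n p q p' q' hpq hpq'
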